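/- The space of holomorphic functions f : ℂ → ℂ satisfying f(z+1) = f(z) and f(z+τ) = exp(−πinτ − 2πinz) f(z) for all z (i.e. H^0 of the line bundle L(φ₀ⁿ) on E_τ) has dimension n when n > 0, with basis given by the theta functions θ[k/n, 0](nτ, nz) for 0 ≤ k < n. -/

import Mathlib

/-!
A section `f` is `1`-periodic, so it is determined by the Fourier coefficients `c_j(f)` of its
restriction to `ℝ` (uniqueness of Fourier series, then the identity theorem). Shifting the
segment `[0, 1]` to `[τ, 1 + τ]` by Cauchy's theorem turns the quasi-periodicity into
`c_{j+n} = exp(πinτ + 2πijτ) c_j`, i.e. the normalised coefficients `exp(-πiτj²/n) c_j` are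
`n`-periodic in `j`. Hence `f` is determined by its `n` normalised coefficients of index
`0 ≤ k < n`, while `θ[k/n, 0](nτ, nz) = Σ_{j ≡ k (mod n)} exp(πiτj²/n) e^{2πijz}` has
normalised coefficients `1` at indices `≡ k` and `0` elsewhere.
-/

open Complex

/-- Mumford's theta function with characteristics:
`θ[a,b](τ,z) = Σ_{m∈ℤ} exp(πiτ(m+a)² + 2πi(m+a)(z+b))`. -/
noncomputable def thetaChar (a b : ℝ) (τ z : ℂ) : ℂ :=
  ∑' m : ℤ, Complex.exp (Real.pi * I * τ * ((m : ℂ) + (a : ℂ)) ^ 2 +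
    2 * Real.pi * I * ((m : ℂ) + (a : ℂ)) * (z + (b : ℂ)))

/-- The space of global sections of the line bundle `L(φ₀ⁿ)` on `E_τ`: holomorphic
functions `f : ℂ → ℂ` with `f(z+1) = f(z)` and `f(z+τ) = exp(−πinτ − 2πinz) f(z)`. -/
def IsSectionLn (τ : ℂ) (n : ℕ) (f : ℂ → ℂ) : Prop :=
  Differentiable ℂ f ∧ (∀ z : ℂ, f (z + 1) = f z) ∧
    (∀ z : ℂ, f (z + τ) =
      Complex.exp (-(Real.pi * I * (n : ℂ) * τ) - 2 * Real.pi * I * (n : ℂ) * z) * f z)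

open Function Filter Topology
open scoped Real

theorem LinearMap.linearIndependent_and_sum_eq_of_injective {R V ι : Type*} [Semiring R]
    [AddCommMonoid V] [Module R V] [Fintype ι] [DecidableEq ι] (T : V →ₗ[R] ι → R)
    (hT : Injective T) (v : ι → V) (hv : ∀ i, T (v i) = Pi.single i 1) :
    LinearIndependent R v ∧ ∀ x, ∑ i, T x i • v i = x := by
  have hTv : T ∘ v = Pi.basisFun R ι := funext fun i => by simp [hv]
  refine ⟨LinearIndependent.of_comp T (hTv ▸ (Pi.basisFun R ι).linearIndependent),
    fun x => hT ?_⟩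
  simpa [map_sum, hv] using (pi_eq_sum_univ' (T x)).symm

theorem Fin.natCast_dvd_sub_iff {n : ℕ} (a b : Fin n) :
    (n : ℤ) ∣ (a : ℕ) - (b : ℕ) ↔ a = b := by
  refine ⟨fun h => ?_, fun h => by simp [h]⟩
  have := Int.eq_zero_of_abs_lt_dvd h (abs_sub_lt_iff.mpr ⟨by omega, by omega⟩)
  omega

theorem jacobiTheta₂_term_add_one_left (j : ℤ) (z τ : ℂ) :
    jacobiTheta₂_term j (z + 1) τ = jacobiTheta₂_term j z τ := by
  have : 2 * π * I * j * (z + 1) + π * I * j ^ 2 * τ =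
      (2 * π * I * j * z + π * I * j ^ 2 * τ) + j * (2 * π * I) := by ring
  rw [jacobiTheta₂_term, jacobiTheta₂_term, this, exp_add, exp_int_mul_two_pi_mul_I, mul_one]

noncomputable def realFourierCoeff (g : ℂ → ℂ) (j : ℤ) : ℂ :=
  ∫ x in (0 : ℝ)..1, cexp (-(2 * π * I * j * x)) * g x

theorem realFourierCoeff_add {f g : ℂ → ℂ} (hf : Continuous f) (hg : Continuous g) (j : ℤ) :
    realFourierCoeff (f + g) j = realFourierCoeff f j + realFourierCoeff g j := by
  simp only [realFourierCoeff, Pi.add_apply, mul_add]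
  exact intervalIntegral.integral_add (Continuous.intervalIntegrable (by fun_prop) _ _)
    (Continuous.intervalIntegrable (by fun_prop) _ _)

theorem realFourierCoeff_smul (c : ℂ) (f : ℂ → ℂ) (j : ℤ) :
    realFourierCoeff (c • f) j = c * realFourierCoeff f j := by
  simp only [realFourierCoeff, Pi.smul_apply, smul_eq_mul, mul_left_comm _ c,
    intervalIntegral.integral_const_mul]

theorem integral_exp_two_pi_I_int_mul (N : ℤ) :
    ∫ x in (0 : ℝ)..1, cexp (2 * π * I * N * x) = if N = 0 then 1 else 0 := by
  split_ifs with hN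
  · simp [hN]
  have hc : 2 * π * I * N ≠ 0 := by simp [Real.pi_ne_zero, I_ne_zero, hN]
  rw [integral_exp_mul_complex hc, show 2 * π * I * N * ((1 : ℝ) : ℂ) = N * (2 * π * I) by
    push_cast; ring, exp_int_mul_two_pi_mul_I]
  simp

theorem norm_exp_two_pi_I_int_mul_ofReal (N : ℤ) (x : ℝ) :
    ‖cexp (2 * π * I * N * x)‖ = 1 := by
  rw [show 2 * π * I * N * x = ((2 * π * N * x : ℝ) : ℂ) * I by push_cast; ring]
  exact norm_exp_ofReal_mul_I _

theorem realFourierCoeff_tsum_mul_exp {b : ℤ → ℂ} (hb : Summable (‖b ·‖)) (j : ℤ) :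
    realFourierCoeff (fun z => ∑' m : ℤ, b m * cexp (2 * π * I * m * z)) j = b j := by
  let G : ℤ → C(ℝ, ℂ) := fun m =>
    ⟨fun x => b m * cexp (2 * π * I * (m - j : ℤ) * x), by fun_prop⟩
  have hG : ∀ m x, G m x = b m * cexp (2 * π * I * (m - j : ℤ) * x) := fun _ _ => rfl
  let K : TopologicalSpace.Compacts ℝ := ⟨Set.uIcc 0 1, isCompact_uIcc⟩
  have hnorm : ∀ m, ‖(G m).restrict K‖ ≤ ‖b m‖ := fun m =>
    (ContinuousMap.norm_le _ (norm_nonneg _)).mpr fun x => by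
    rw [ContinuousMap.restrict_apply, hG, norm_mul, norm_exp_two_pi_I_int_mul_ofReal, mul_one]
  calc realFourierCoeff (fun z => ∑' m : ℤ, b m * cexp (2 * π * I * m * z)) j
      = ∫ x in (0 : ℝ)..1, ∑' m, G m x := by
        refine intervalIntegral.integral_congr fun x _ => ?_
        simp only [hG, ← tsum_mul_left]
        refine tsum_congr fun m => ?_
        rw [mul_left_comm, ← exp_add]
        push_cast
        ring_nf
    _ = ∑' m, ∫ x in (0 : ℝ)..1, G m x :=
        (intervalIntegral.tsum_intervalIntegral_eq_of_summable_norm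
          (hb.of_nonneg_of_le (fun _ => norm_nonneg _) hnorm)).symm
    _ = ∑' m, if m = j then b j else 0 := by
        refine tsum_congr fun m => ?_
        simp only [hG, intervalIntegral.integral_const_mul, integral_exp_two_pi_I_int_mul,
          sub_eq_zero]
        split_ifs with h <;> simp [h]
    _ = b j := tsum_ite_eq j _

theorem eq_zero_of_forall_ofReal_eq_zero {g : ℂ → ℂ} (hg : Differentiable ℂ g)
    (h : ∀ x : ℝ, g x = 0) : g = 0 := by
  have hreal : Tendsto ((↑) : ℝ → ℂ) (𝓝[≠] 0) (𝓝[≠] 0) := by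
    simpa using continuous_ofReal.continuousWithinAt.tendsto_nhdsWithin (x := 0)
      (s := {0}ᶜ) (t := {0}ᶜ) fun x hx => ofReal_ne_zero.mpr hx
  funext z
  have han := analyticOnNhd_univ_iff_differentiable.mpr hg
  exact han.eqOn_zero_of_preconnected_of_frequently_eq_zero isPreconnected_univ (Set.mem_univ 0)
    (hreal.frequently (.of_forall h)) (Set.mem_univ z)

theorem forall_ofReal_eq_zero_of_realFourierCoeff_eq_zero {g : ℂ → ℂ} (hg : Continuous g)
    (hper : Periodic g 1) (hc : ∀ j, realFourierCoeff g j = 0) (x : ℝ) : g x = 0 := by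
  have hper' : Periodic (fun x : ℝ => g x) 1 := fun x => by simpa using hper x
  let u : C(AddCircle (1 : ℝ), ℂ) :=
    ⟨hper'.lift, continuous_coinduced_dom.mpr (hg.comp continuous_ofReal)⟩
  have hu : fourierCoeff u = 0 := funext fun j => by
    rw [fourierCoeff_eq_intervalIntegral _ j 0, Pi.zero_apply, ← hc j, zero_add, div_one,
      one_smul, realFourierCoeff]
    refine intervalIntegral.integral_congr fun x _ => ?_
    rw [fourier_coe_apply, smul_eq_mul, ofReal_one, div_one, Int.cast_neg, mul_neg, neg_mul]
    rfl
  have := has_pointwise_sum_fourier_series_of_summable (f := u) (hu ▸ summable_zero) x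
  simp only [hu, Pi.zero_apply, zero_smul] at this
  exact this.unique hasSum_zero

-- Cauchy's theorem on `[0, 1] × [0, Im w]` gives the vertical shift, periodicity the horizontal.
theorem intervalIntegral_comp_add_of_periodic {g : ℂ → ℂ} (hg : Differentiable ℂ g)
    (hper : Periodic g 1) (w : ℂ) : ∫ x in (0 : ℝ)..1, g (x + w) = ∫ x in (0 : ℝ)..1, g x := by
  have vertical : ∀ t : ℝ, ∫ x in (0 : ℝ)..1, g (x + t * I) = ∫ x in (0 : ℝ)..1, g x := by
    intro t
    have h := integral_boundary_rect_eq_zero_of_differentiableOn g 0 (1 + t * I)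
      hg.differentiableOn
    have hsides : ∫ y in (0 : ℝ)..t, g (1 + y * I) = ∫ y in (0 : ℝ)..t, g (y * I) :=
      intervalIntegral.integral_congr fun y _ => by rw [add_comm]; exact hper _
    simp only [zero_re, zero_im, add_re, add_im, one_re, one_im, mul_re, mul_im, I_re, I_im,
      ofReal_re, ofReal_im, ofReal_zero, ofReal_one, mul_zero, mul_one, zero_mul, sub_self,
      add_zero, zero_add, smul_eq_mul] at h
    rw [hsides, add_sub_cancel_right, sub_eq_zero] at h
    exact h.symm
  have horizontal : Periodic (fun x : ℝ => g (x + w.im * I)) 1 := fun x => by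
    simpa [add_right_comm] using hper (x + w.im * I)
  calc ∫ x in (0 : ℝ)..1, g (x + w) = ∫ x in (0 : ℝ)..1, g ((x + w.re : ℝ) + w.im * I) := by
        refine intervalIntegral.integral_congr fun x _ => ?_
        rw [ofReal_add, add_assoc, re_add_im]
    _ = ∫ x in w.re..w.re + 1, g (x + w.im * I) := by
        rw [intervalIntegral.integral_comp_add_right (fun x : ℝ => g (x + w.im * I)), zero_add,
          add_comm]
    _ = ∫ x in (0 : ℝ)..0 + 1, g (x + w.im * I) := horizontal.intervalIntegral_add_eq _ _
    _ = ∫ x in (0 : ℝ)..1, g x := by rw [zero_add, vertical]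

noncomputable def thetaSection (τ : ℂ) (n k : ℕ) (z : ℂ) : ℂ :=
  thetaChar ((k : ℝ) / (n : ℝ)) 0 ((n : ℂ) * τ) ((n : ℂ) * z)

section ThetaSection

variable {τ : ℂ} {n : ℕ} (k : ℕ)

theorem thetaSection_eq_tsum (hn : n ≠ 0) (z : ℂ) :
    thetaSection τ n k z = ∑' m : ℤ, jacobiTheta₂_term (m * n + k) z (τ / n) := by
  have hn' : (n : ℂ) ≠ 0 := Nat.cast_ne_zero.mpr hn
  refine tsum_congr fun m => ?_
  rw [jacobiTheta₂_term]
  congr 1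
  push_cast
  field_simp
  ring

theorem thetaSection_eq_mul_jacobiTheta₂ (hn : n ≠ 0) (z : ℂ) :
    thetaSection τ n k z = cexp (π * I * τ * k ^ 2 / n + 2 * π * I * k * z) *
      jacobiTheta₂ (n * z + k * τ) (n * τ) := by
  have hn' : (n : ℂ) ≠ 0 := Nat.cast_ne_zero.mpr hn
  rw [thetaSection_eq_tsum k hn, jacobiTheta₂, ← tsum_mul_left]
  refine tsum_congr fun m => ?_
  rw [jacobiTheta₂_term, jacobiTheta₂_term, ← exp_add]
  congr 1
  push_cast
  field_simp
  ring

theorem differentiable_thetaSection (hn : n ≠ 0) (hτ : 0 < τ.im) :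
    Differentiable ℂ (thetaSection τ n k) := by
  have hnτ : 0 < ((n : ℂ) * τ).im := by
    simpa using mul_pos (Nat.cast_pos.mpr (Nat.pos_of_ne_zero hn)) hτ
  simp_rw [funext (thetaSection_eq_mul_jacobiTheta₂ k hn)]
  intro z
  exact (by fun_prop : Differentiable ℂ _).differentiableAt.mul
    ((differentiableAt_jacobiTheta₂_fst _ hnτ).comp z (by fun_prop))

theorem thetaSection_add_one (hn : n ≠ 0) (z : ℂ) :
    thetaSection τ n k (z + 1) = thetaSection τ n k z := by
  simp_rw [thetaSection_eq_tsum k hn, jacobiTheta₂_term_add_one_left]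

theorem thetaSection_add_tau (hn : n ≠ 0) (z : ℂ) :
    thetaSection τ n k (z + τ) =
      cexp (-(π * I * n * τ) - 2 * π * I * n * z) * thetaSection τ n k z := by
  have hn' : (n : ℂ) ≠ 0 := Nat.cast_ne_zero.mpr hn
  rw [thetaSection_eq_tsum k hn, thetaSection_eq_tsum k hn, ← tsum_mul_left]
  conv_rhs => rw [← (Equiv.addRight (1 : ℤ)).tsum_eq]
  refine tsum_congr fun m => ?_
  rw [jacobiTheta₂_term, jacobiTheta₂_term, ← exp_add, Equiv.coe_addRight]
  congr 1
  push_cast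
  field_simp
  ring

end ThetaSection

section Sections

variable {τ : ℂ} {n : ℕ} {f : ℂ → ℂ}

theorem IsSectionLn.realFourierCoeff_add_natCast (hf : IsSectionLn τ n f) (j : ℤ) :
    realFourierCoeff f (j + n) =
      cexp (π * I * n * τ + 2 * π * I * j * τ) * realFourierCoeff f j := by
  obtain ⟨hdiff, hper, hquasi⟩ := hf
  let h : ℂ → ℂ := fun z => cexp (-(2 * π * I * j * z)) * f z
  have hh : Periodic h 1 := fun z => by
    have : -(2 * π * I * j * (z + 1)) = -(2 * π * I * j * z) + (-j : ℤ) * (2 * π * I) := by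
      push_cast; ring
    simp only [h, hper z, this, exp_add, exp_int_mul_two_pi_mul_I, mul_one]
  have hshift := intervalIntegral_comp_add_of_periodic (by fun_prop) hh τ
  have : realFourierCoeff f j =
      cexp (-(π * I * n * τ + 2 * π * I * j * τ)) * realFourierCoeff f (j + n) := by
    rw [realFourierCoeff, ← hshift, realFourierCoeff, ← intervalIntegral.integral_const_mul]
    refine intervalIntegral.integral_congr fun x _ => ?_
    simp only [h, hquasi, ← mul_assoc, ← exp_add]
    congr 2
    push_cast
    ring
  rw [this, ← mul_assoc, ← exp_add, add_neg_cancel, exp_zero, one_mul]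

noncomputable def sectionCoeff (τ : ℂ) (n : ℕ) (f : ℂ → ℂ) (j : ℤ) : ℂ :=
  cexp (-(π * I * τ * j ^ 2 / n)) * realFourierCoeff f j

theorem IsSectionLn.periodic_sectionCoeff (hn : n ≠ 0) (hf : IsSectionLn τ n f) :
    Periodic (sectionCoeff τ n f) n := fun j => by
  have hn' : (n : ℂ) ≠ 0 := Nat.cast_ne_zero.mpr hn
  rw [sectionCoeff, sectionCoeff, hf.realFourierCoeff_add_natCast, ← mul_assoc, ← exp_add]
  congr 2
  push_cast
  field_simp
  ring

def sectionsLn (τ : ℂ) (n : ℕ) : Submodule ℂ (ℂ → ℂ) where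
  carrier := {f | IsSectionLn τ n f}
  add_mem' {f g} hf hg := ⟨hf.1.add hg.1, fun z => by simp [hf.2.1 z, hg.2.1 z],
    fun z => by simp [hf.2.2 z, hg.2.2 z, mul_add]⟩
  zero_mem' := ⟨differentiable_const 0, fun _ => rfl, fun _ => by simp⟩
  smul_mem' c f hf := ⟨hf.1.const_smul c, fun z => by simp [hf.2.1 z],
    fun z => by simp [hf.2.2 z, mul_left_comm]⟩

noncomputable def sectionCoeffMap (τ : ℂ) (n : ℕ) : sectionsLn τ n →ₗ[ℂ] Fin n → ℂ where
  toFun f k := sectionCoeff τ n f k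
  map_add' f g := funext fun k => by
    simp [sectionCoeff, realFourierCoeff_add f.2.1.continuous g.2.1.continuous, mul_add]
  map_smul' c f := funext fun k => by
    simp [sectionCoeff, realFourierCoeff_smul, mul_left_comm]

theorem sectionCoeffMap_injective (hn : n ≠ 0) : Injective (sectionCoeffMap τ n) := by
  rw [← LinearMap.ker_eq_bot, LinearMap.ker_eq_bot']
  rintro ⟨f, hf⟩ hzero
  have hcoeff : ∀ j : ℤ, realFourierCoeff f j = 0 := fun j => by
    have hj : 0 ≤ j % n := Int.emod_nonneg j (by exact_mod_cast hn)
    have hjn : j % n < n := Int.emod_lt_of_pos j (by omega)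
    have h : sectionCoeff τ n f (j % n) = 0 := by
      simpa [sectionCoeffMap, Int.toNat_of_nonneg hj] using
        congrFun hzero ⟨(j % n).toNat, by omega⟩
    have hmod : sectionCoeff τ n f (j % n) = sectionCoeff τ n f j := by
      rw [Int.emod_def, mul_comm]
      exact (hf.periodic_sectionCoeff hn).sub_int_mul_eq _
    rw [hmod, sectionCoeff] at h
    exact (mul_eq_zero.mp h).resolve_left (exp_ne_zero _)
  ext1
  exact eq_zero_of_forall_ofReal_eq_zero hf.1
    (forall_ofReal_eq_zero_of_realFourierCoeff_eq_zero hf.1.continuous hf.2.1 hcoeff)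

end Sections

section ThetaCoeff

variable {τ : ℂ} {n : ℕ}

theorem thetaSection_eq_tsum_mul_exp (hn : n ≠ 0) (k : ℕ) (z : ℂ) :
    thetaSection τ n k z =
      ∑' j : ℤ, (if (n : ℤ) ∣ j - k then jacobiTheta₂_term j 0 (τ / n) else 0) *
        cexp (2 * π * I * j * z) := by
  have hinj : Injective fun m : ℤ => m * n + k := fun a b h =>
    mul_right_cancel₀ (by exact_mod_cast hn) (add_right_cancel h)
  rw [thetaSection_eq_tsum k hn]
  refine (tsum_congr fun m => ?_).trans (hinj.tsum_eq fun j hj => ?_)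
  · rw [if_pos ⟨m, by ring⟩, jacobiTheta₂_term, jacobiTheta₂_term, ← exp_add]
    congr 1
    ring
  · obtain ⟨m, hm⟩ : (n : ℤ) ∣ j - k := by_contra fun h => hj (by simp [h])
    exact ⟨m, by simp only; linarith⟩

theorem sectionCoeff_thetaSection (hn : n ≠ 0) (hτ : 0 < τ.im) (k : ℕ) (j : ℤ) :
    sectionCoeff τ n (thetaSection τ n k) j = if (n : ℤ) ∣ j - k then 1 else 0 := by
  have hsum : Summable fun j : ℤ => ‖jacobiTheta₂_term j 0 (τ / n)‖ :=
    ((summable_jacobiTheta₂_term_iff 0 _).mpr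
      (by simpa using div_pos hτ (Nat.cast_pos.mpr (Nat.pos_of_ne_zero hn)))).norm
  rw [sectionCoeff, funext (thetaSection_eq_tsum_mul_exp hn k),
    realFourierCoeff_tsum_mul_exp (hsum.of_nonneg_of_le (fun _ => norm_nonneg _)
      fun j => by split_ifs <;> simp)]
  split_ifs
  · rw [jacobiTheta₂_term, ← exp_add, ← exp_zero]
    congr 1
    ring
  · exact mul_zero _

theorem thetaSection_mem_sectionsLn (hn : n ≠ 0) (hτ : 0 < τ.im) (k : ℕ) :
    thetaSection τ n k ∈ sectionsLn τ n :=
  ⟨differentiable_thetaSection k hn hτ, thetaSection_add_one k hn, thetaSection_add_tau k hn⟩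

theorem sectionCoeffMap_thetaSection (hτ : 0 < τ.im) (k : Fin n) :
    sectionCoeffMap τ n ⟨thetaSection τ n k, thetaSection_mem_sectionsLn k.pos.ne' hτ k⟩ =
      Pi.single k 1 := funext fun k' => by
  simp only [sectionCoeffMap, LinearMap.coe_mk, AddHom.coe_mk,
    sectionCoeff_thetaSection k.pos.ne' hτ, Fin.natCast_dvd_sub_iff, Pi.single_apply]

end ThetaCoeff

/-- **`H^0(L(φ₀ⁿ))` has dimension `n`, with basis the theta functions
`θ[k/n, 0](nτ, nz)`, `0 ≤ k < n`.**  Each of these theta functions is a section, they are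
linearly independent, and every section is a (unique) linear combination of them. -/
theorem sections_Ln_basis_theta (τ : ℂ) (hτ : 0 < τ.im) (n : ℕ) (hn : 0 < n) :
    (∀ k : Fin n, IsSectionLn τ n
      (fun z => thetaChar ((k : ℝ) / (n : ℝ)) 0 ((n : ℂ) * τ) ((n : ℂ) * z))) ∧
    LinearIndependent ℂ
      (fun (k : Fin n) => (fun z => thetaChar ((k : ℝ) / (n : ℝ)) 0 ((n : ℂ) * τ)
        ((n : ℂ) * z) : ℂ → ℂ)) ∧
    (∀ f : ℂ → ℂ, IsSectionLn τ n f → ∃ c : Fin n → ℂ,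
      f = fun z => ∑ k : Fin n, c k *
        thetaChar ((k : ℝ) / (n : ℝ)) 0 ((n : ℂ) * τ) ((n : ℂ) * z)) := by
  have hθ (k : Fin n) : thetaSection τ n k ∈ sectionsLn τ n :=
    thetaSection_mem_sectionsLn hn.ne' hτ k
  obtain ⟨hli, hsum⟩ := (sectionCoeffMap τ n).linearIndependent_and_sum_eq_of_injective
    (sectionCoeffMap_injective hn.ne') (fun k => ⟨_, hθ k⟩) (sectionCoeffMap_thetaSection hτ)
  refine ⟨hθ, hli.map' _ (sectionsLn τ n).ker_subtype,
    fun f hf => ⟨sectionCoeffMap τ n ⟨f, hf⟩, ?_⟩⟩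
  have hf' := congrArg Subtype.val (hsum ⟨f, hf⟩)
  funext z
  simpa [thetaSection] using (congrFun hf' z).symm
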